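/- arXiv:1609.05613 — 8 statements merged into one kernel-verified Lean document; each statement's English description precedes it below -/
import Mathlib

section
/- With g² = 2p⁰q⁰ − 2 − 2R²(p·q), one has the lower bound g² ≥ (R⁴|p×q|² + R²|p−q|²)/(p⁰q⁰), where p×q is the cross product in ℝ³. -/
noncomputable section

/-- The cross product on `EuclideanSpace ℝ (Fin 3)`. -/
def cross3 (p q : EuclideanSpace ℝ (Fin 3)) : EuclideanSpace ℝ (Fin 3) :=
  WithLp.toLp 2 ![p 1 * q 2 - p 2 * q 1, p 2 * q 0 - p 0 * q 2, p 0 * q 1 - p 1 * q 0]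

theorem stmt_3 (p q : EuclideanSpace ℝ (Fin 3)) (R : ℝ) (hR : 0 < R)
    (p0 q0 gsq : ℝ)
    (hp0 : p0 = Real.sqrt (1 + R ^ 2 * ‖p‖ ^ 2))
    (hq0 : q0 = Real.sqrt (1 + R ^ 2 * ‖q‖ ^ 2))
    (hgsq : gsq = 2 * p0 * q0 - 2 - 2 * R ^ 2 * (inner ℝ p q : ℝ)) :
    (R ^ 4 * ‖cross3 p q‖ ^ 2 + R ^ 2 * ‖p - q‖ ^ 2) / (p0 * q0) ≤ gsq := by
  have hip : (inner ℝ p q : ℝ) = p 0 * q 0 + p 1 * q 1 + p 2 * q 2 := by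
    simp [PiLp.inner_apply, Fin.sum_univ_three, mul_comm]
  have hnp : ‖p‖ ^ 2 = p 0 ^ 2 + p 1 ^ 2 + p 2 ^ 2 := by
    rw [← real_inner_self_eq_norm_sq]
    simp only [PiLp.inner_apply, RCLike.inner_apply, conj_trivial, Fin.sum_univ_three, PiLp.sub_apply, sq]
  have hnq : ‖q‖ ^ 2 = q 0 ^ 2 + q 1 ^ 2 + q 2 ^ 2 := by
    rw [← real_inner_self_eq_norm_sq]
    simp only [PiLp.inner_apply, RCLike.inner_apply, conj_trivial, Fin.sum_univ_three, PiLp.sub_apply, sq]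
  have hnd : ‖p - q‖ ^ 2 = (p 0 - q 0) ^ 2 + (p 1 - q 1) ^ 2 + (p 2 - q 2) ^ 2 := by
    rw [← real_inner_self_eq_norm_sq]
    simp only [PiLp.inner_apply, RCLike.inner_apply, conj_trivial, Fin.sum_univ_three, PiLp.sub_apply, sq]
  have hnc : ‖cross3 p q‖ ^ 2 = (p 1 * q 2 - p 2 * q 1) ^ 2 + (p 2 * q 0 - p 0 * q 2) ^ 2
      + (p 0 * q 1 - p 1 * q 0) ^ 2 := by
    rw [← real_inner_self_eq_norm_sq]
    simp only [PiLp.inner_apply, RCLike.inner_apply, conj_trivial, Fin.sum_univ_three, cross3, sq]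
    simp
  have hp0sq : p0 ^ 2 = 1 + R ^ 2 * ‖p‖ ^ 2 := by
    rw [hp0, Real.sq_sqrt]; positivity
  have hq0sq : q0 ^ 2 = 1 + R ^ 2 * ‖q‖ ^ 2 := by
    rw [hq0, Real.sq_sqrt]; positivity
  have hp0pos : 0 < p0 := by
    rw [hp0]; apply Real.sqrt_pos.mpr; positivity
  have hq0pos : 0 < q0 := by
    rw [hq0]; apply Real.sqrt_pos.mpr; positivity
  set a := p0 * q0 with ha
  set b := 1 + R ^ 2 * (inner ℝ p q : ℝ) with hb
  have hapos : 0 < a := mul_pos hp0pos hq0pos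
  have key : R ^ 4 * ‖cross3 p q‖ ^ 2 + R ^ 2 * ‖p - q‖ ^ 2 = a ^ 2 - b ^ 2 := by
    have ha2 : a ^ 2 = (1 + R ^ 2 * ‖p‖ ^ 2) * (1 + R ^ 2 * ‖q‖ ^ 2) := by
      rw [ha, mul_pow, hp0sq, hq0sq]
    rw [ha2, hnc, hnd, hnp, hnq, hb, hip]
    ring
  rw [div_le_iff₀ hapos, key, hgsq, hip]
  have hb' : 2 * p0 * q0 - 2 - 2 * R ^ 2 * (p 0 * q 0 + p 1 * q 1 + p 2 * q 2)
      = 2 * a - 2 * b := by rw [ha, hb, hip]; ring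
  rw [hb']
  nlinarith [sq_nonneg (a - b)]
end
end

section
/- With g² = 2p⁰q⁰ − 2 − 2R²(p·q), one has the upper bound g² ≤ R²|p−q|². -/
noncomputable section

theorem stmt_4 (p q : EuclideanSpace ℝ (Fin 3)) (R : ℝ) (hR : 0 < R)
    (p0 q0 gsq : ℝ)
    (hp0 : p0 = Real.sqrt (1 + R ^ 2 * ‖p‖ ^ 2))
    (hq0 : q0 = Real.sqrt (1 + R ^ 2 * ‖q‖ ^ 2))
    (hgsq : gsq = 2 * p0 * q0 - 2 - 2 * R ^ 2 * (inner ℝ p q : ℝ)) :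
    gsq ≤ R ^ 2 * ‖p - q‖ ^ 2 := by
  have hA : (0:ℝ) ≤ 1 + R ^ 2 * ‖p‖ ^ 2 := by positivity
  have hB : (0:ℝ) ≤ 1 + R ^ 2 * ‖q‖ ^ 2 := by positivity
  have key : 2 * p0 * q0 ≤ (1 + R ^ 2 * ‖p‖ ^ 2) + (1 + R ^ 2 * ‖q‖ ^ 2) := by
    have h := two_mul_le_add_sq p0 q0
    rw [hp0, hq0] at h ⊢
    rwa [Real.sq_sqrt hA, Real.sq_sqrt hB] at h
  have hns : ‖p - q‖ ^ 2 = ‖p‖ ^ 2 - 2 * (inner ℝ p q : ℝ) + ‖q‖ ^ 2 :=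
    norm_sub_sq_real p q
  rw [hgsq, hns]
  nlinarith [key]
end
end

section
/- Let ã(p,q,ω) = 2p⁰q⁰e·ω·(p̂ − q̂)/(e² − R²(ω·(p+q))²) with e = p⁰+q⁰, p̂ = p/p⁰, q̂ = q/q⁰. Then |ã(p,q,ω)| ≤ e|p−q|/√s, where s = e² − R²|p+q|² = 2 + 2p⁰q⁰ − 2R²(p·q). -/
set_option maxHeartbeats 1000000

noncomputable section

open RealInnerProductSpace

theorem keylem (P Q C Y W : ℝ)
    (hP : 1 ≤ P) (hQ : 1 ≤ Q) (hG : 0 ≤ (P^2-1)*(Q^2-1)-C^2)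
    (hY : Y^2 ≤ P^2+Q^2-2+2*C)
    (h1 : (P^2+Q^2-2+2*C)^2*W^2 ≤ (P+Q)^2*((P^2-1)*(Q^2-1)-C^2)*((P^2+Q^2-2+2*C)-Y^2)) :
    4*((P-Q)*(2+2*P*Q-2*C)/2*Y + (P^2+Q^2-2+2*C)*W)^2
      ≤ (2+2*P*Q-2*C-4)*((P+Q)^2-Y^2)*(P^2+Q^2-2+2*C)^2 := by
  have hPQ1 : 1 ≤ P*Q := by nlinarith
  have hCle : C ≤ P*Q - 1 := by
    by_contra h
    push_neg at h
    have h1' : 0 < C + (P*Q-1) := by nlinarith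
    nlinarith [mul_pos (sub_pos.mpr h) h1', sq_nonneg (P-Q)]
  have hCge : 1 - P*Q ≤ C := by
    by_contra h
    push_neg at h
    have h1' : 0 < -C - (P*Q-1) := by nlinarith
    nlinarith [mul_pos h1' (show (0:ℝ) < 1 - P*Q - C by nlinarith), sq_nonneg (P-Q)]
  have hM2n : 0 ≤ P^2+Q^2-2+2*C := by nlinarith [sq_nonneg (P-Q)]
  have hs4 : 4 ≤ 2+2*P*Q-2*C := by linarith
  have hslack : 0 ≤ (P+Q)^2*((P^2-1)*(Q^2-1)-C^2)*((P^2+Q^2-2+2*C)-Y^2) - (P^2+Q^2-2+2*C)^2*W^2 :=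
    sub_nonneg.mpr h1
  rcases eq_or_lt_of_le hG with hG0 | hGpos
  · -- G = 0 case : M2*W = 0
    rw [← hG0] at hslack
    have h2 : ((P^2+Q^2-2+2*C)*W)^2 ≤ 0 := by nlinarith [hslack]
    have hMW : (P^2+Q^2-2+2*C)*W = 0 := sq_eq_zero_iff.mp (le_antisymm h2 (sq_nonneg _))
    have h5 : 0 ≤ (2+2*P*Q-2*C)*(P-Q)^2*(P+Q)^2*((P^2+Q^2-2+2*C)-Y^2) :=
      mul_nonneg (mul_nonneg (mul_nonneg (by linarith) (sq_nonneg _)) (sq_nonneg _)) (by linarith)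
    have h6 : (2+2*P*Q-2*C-4)*((P+Q)^2-Y^2)*(P^2+Q^2-2+2*C)^2
          - 4*((P-Q)*(2+2*P*Q-2*C)/2*Y + (P^2+Q^2-2+2*C)*W)^2
        = (2+2*P*Q-2*C)*(P-Q)^2*(P+Q)^2*((P^2+Q^2-2+2*C)-Y^2) := by
      linear_combination (-(4*(P-Q)*(2+2*P*Q-2*C)*Y) - 4*((P^2+Q^2-2+2*C)*W))*hMW - 4*((P+Q)^2-Y^2)*(P^2+Q^2-2+2*C)*hG0
    linarith [h6, h5]
  · rcases eq_or_ne P Q with hPQe | hPQe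
    · subst hPQe
      have h4 : (2+2*P*P-2*C-4)*((P+P)^2-Y^2)*(P^2+P^2-2+2*C)^2
            - 4*((P-P)*(2+2*P*P-2*C)/2*Y + (P^2+P^2-2+2*C)*W)^2
          = 4*((P+P)^2*((P^2-1)*(P^2-1)-C^2)*((P^2+P^2-2+2*C)-Y^2) - (P^2+P^2-2+2*C)^2*W^2)
            + (2+2*P*P-2*C-4)*(P^2+P^2-2+2*C)*(2+2*P*P-2*C)*Y^2 := by ring
      have h5 : 0 ≤ (2+2*P*P-2*C-4)*(P^2+P^2-2+2*C)*(2+2*P*P-2*C)*Y^2 :=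
        mul_nonneg (mul_nonneg (mul_nonneg (by linarith) (by linarith)) (by linarith)) (sq_nonneg _)
      linarith [h4, hslack, h5]
    · have hrpos : 0 < (P-Q)^2 := by
        have h' : P - Q ≠ 0 := sub_ne_zero.mpr hPQe
        positivity
      have hrG : 0 < (P-Q)^2 * ((P^2-1)*(Q^2-1) - C^2) := mul_pos hrpos hGpos
      have hident : (P-Q)^2*((P^2-1)*(Q^2-1)-C^2)*((2+2*P*Q-2*C-4)*((P+Q)^2-Y^2)*(P^2+Q^2-2+2*C)^2 - 4*((P-Q)*(2+2*P*Q-2*C)/2*Y + (P^2+Q^2-2+2*C)*W)^2)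
          = (P-Q)^2*(4*((P^2-1)*(Q^2-1)-C^2) + (2+2*P*Q-2*C)*(P-Q)^2)*((P+Q)^2*((P^2-1)*(Q^2-1)-C^2)*((P^2+Q^2-2+2*C)-Y^2) - (P^2+Q^2-2+2*C)^2*W^2)
            + (2+2*P*Q-2*C)*((P-Q)^2*(P^2+Q^2-2+2*C)*W - 2*(P-Q)*((P^2-1)*(Q^2-1)-C^2)*Y)^2 := by
        ring
      have hpos : 0 ≤ (P-Q)^2*((P^2-1)*(Q^2-1)-C^2)*((2+2*P*Q-2*C-4)*((P+Q)^2-Y^2)*(P^2+Q^2-2+2*C)^2 - 4*((P-Q)*(2+2*P*Q-2*C)/2*Y + (P^2+Q^2-2+2*C)*W)^2) := by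
        rw [hident]
        have t1 : 0 ≤ (P-Q)^2*(4*((P^2-1)*(Q^2-1)-C^2) + (2+2*P*Q-2*C)*(P-Q)^2) := by positivity
        have t2 : (0:ℝ) ≤ 2+2*P*Q-2*C := by linarith
        exact add_nonneg (mul_nonneg t1 hslack) (mul_nonneg t2 (sq_nonneg _))
      by_contra hcon
      push_neg at hcon
      have : (P-Q)^2*((P^2-1)*(Q^2-1)-C^2)*((2+2*P*Q-2*C-4)*((P+Q)^2-Y^2)*(P^2+Q^2-2+2*C)^2 - 4*((P-Q)*(2+2*P*Q-2*C)/2*Y + (P^2+Q^2-2+2*C)*W)^2) < 0 :=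
        mul_neg_of_pos_of_neg hrG (by linarith)
      linarith


lemma innersq {E : Type*} [NormedAddCommGroup E] [InnerProductSpace ℝ E] (x y : E) :
    (inner ℝ x y : ℝ)^2 ≤ ‖x‖^2*‖y‖^2 := by
  have h := abs_real_inner_le_norm x y
  calc (inner ℝ x y : ℝ)^2 = |(inner ℝ x y : ℝ)|^2 := (sq_abs _).symm
  _ ≤ (‖x‖*‖y‖)^2 := by apply pow_le_pow_left₀ (abs_nonneg _) h
  _ = ‖x‖^2*‖y‖^2 := by ring

lemma innersq_unit {E : Type*} [NormedAddCommGroup E] [InnerProductSpace ℝ E] (ω y : E)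
    (hω : ‖ω‖ = 1) : (inner ℝ ω y : ℝ)^2 ≤ ‖y‖^2 := by
  have := innersq ω y
  rwa [hω, one_pow, one_mul] at this

theorem stmt_7 (p q ω : EuclideanSpace ℝ (Fin 3)) (R : ℝ) (hR : 0 < R)
    (hω : ‖ω‖ = 1)
    (p0 q0 e s atil : ℝ)
    (hp0 : p0 = Real.sqrt (1 + R ^ 2 * ‖p‖ ^ 2))
    (hq0 : q0 = Real.sqrt (1 + R ^ 2 * ‖q‖ ^ 2))
    (he : e = p0 + q0)
    (hs : s = 2 + 2 * p0 * q0 - 2 * R ^ 2 * (inner ℝ p q : ℝ))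
    (ha : atil = 2 * p0 * q0 * e * (inner ℝ ω ((1 / p0) • p - (1 / q0) • q) : ℝ) /
      (e ^ 2 - R ^ 2 * (inner ℝ ω (p + q) : ℝ) ^ 2)) :
    |atil| ≤ e * ‖p - q‖ / Real.sqrt s := by
  have hp2 : p0^2 = 1 + R^2*‖p‖^2 := by rw [hp0]; exact Real.sq_sqrt (by positivity)
  have hq2 : q0^2 = 1 + R^2*‖q‖^2 := by rw [hq0]; exact Real.sq_sqrt (by positivity)
  have hp1 : 1 ≤ p0 := by
    rw [hp0]
    calc (1:ℝ) = Real.sqrt 1 := Real.sqrt_one.symm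
    _ ≤ _ := Real.sqrt_le_sqrt (by linarith [mul_nonneg (sq_nonneg R) (sq_nonneg ‖p‖)])
  have hq1 : 1 ≤ q0 := by
    rw [hq0]
    calc (1:ℝ) = Real.sqrt 1 := Real.sqrt_one.symm
    _ ≤ _ := Real.sqrt_le_sqrt (by linarith [mul_nonneg (sq_nonneg R) (sq_nonneg ‖q‖)])
  have hp0pos : 0 < p0 := by linarith
  have hq0pos : 0 < q0 := by linarith
  have hepos : 0 < e := by rw [he]; linarith
  set c : ℝ := (inner ℝ p q : ℝ) with hc
  set u : ℝ := (inner ℝ ω p : ℝ) with hu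
  set v : ℝ := (inner ℝ ω q : ℝ) with hv
  have hc2 : c^2 ≤ ‖p‖^2*‖q‖^2 := innersq p q
  have hcle : c ≤ ‖p‖*‖q‖ := real_inner_le_norm p q
  have hu2 : u^2 ≤ ‖p‖^2 := innersq_unit ω p hω
  have hwn : (inner ℝ ω (p+q) : ℝ)^2 ≤ ‖p+q‖^2 := innersq_unit ω (p+q) hω
  have E3 : ‖p+q‖^2 = ‖p‖^2 + 2*c + ‖q‖^2 := by
    rw [hc]; exact norm_add_sq_real p q
  have E6 : ‖p-q‖^2 = ‖p‖^2 - 2*c + ‖q‖^2 := by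
    rw [hc]; exact norm_sub_sq_real p q
  have E5 : (inner ℝ ω (p+q) : ℝ) = u + v := by simp [hu, hv, inner_add_right]
  -- s ≥ 4
  have hpq2 : (p0*q0)^2 = (1+R^2*‖p‖^2)*(1+R^2*‖q‖^2) := by rw [mul_pow, hp2, hq2]
  have habpos : 0 < 1 + R^2*(‖p‖*‖q‖) + p0*q0 := by
    nlinarith [mul_pos hp0pos hq0pos, mul_nonneg (sq_nonneg R) (mul_nonneg (norm_nonneg p) (norm_nonneg q))]
  have hpq_ge : 1 + R^2*(‖p‖*‖q‖) ≤ p0*q0 := by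
    by_contra h
    push_neg at h
    nlinarith [mul_pos (show (0:ℝ) < 1+R^2*(‖p‖*‖q‖) - p0*q0 by linarith) habpos, hpq2,
      sq_nonneg (R*‖p‖ - R*‖q‖)]
  have hRc : R^2*c ≤ R^2*(‖p‖*‖q‖) := mul_le_mul_of_nonneg_left hcle (sq_nonneg R)
  have hs4 : 4 ≤ s := by rw [hs]; nlinarith [hpq_ge, hRc]
  have hseq : s = e^2 - R^2*‖p+q‖^2 := by
    rw [hs, he, E3]; linear_combination -hp2 - hq2
  have hsD : s ≤ e^2 - R^2*(inner ℝ ω (p+q) : ℝ)^2 := by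
    nlinarith [mul_nonneg (sq_nonneg R) (sub_nonneg.mpr hwn), hseq]
  have hD : 0 < e^2 - R^2*(inner ℝ ω (p+q) : ℝ)^2 := by linarith
  -- the key inequality
  have hkey : 4*R^2*(q0*u - p0*v)^2 ≤ (s-4)*(e^2 - R^2*(inner ℝ ω (p+q) : ℝ)^2) := by
    rcases eq_or_ne (p+q) 0 with h0 | h0
    · -- degenerate case q = -p
      have hq' : q = -p := by
        rw [add_eq_zero_iff_eq_neg] at h0
        rw [h0, neg_neg]
      have hq0p : q0 = p0 := by rw [hq0, hp0, hq', norm_neg]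
      have hvv : v = -u := by rw [hv, hu, hq', inner_neg_right]
      have hcc : c = -‖p‖^2 := by rw [hc, hq', inner_neg_right, real_inner_self_eq_norm_sq]
      have hz : (inner ℝ ω (p+q) : ℝ) = 0 := by rw [h0, inner_zero_right]
      have hsval : s = 4*p0^2 := by
        rw [hs, hq0p, hcc]; linear_combination -2*hp2
      have heval : e = 2*p0 := by rw [he, hq0p]; ring
      rw [hz, hq0p, hvv, hsval, heval]
      have hp4 : p0^2*p0^2 = p0^2*(1+R^2*‖p‖^2) := by rw [← hp2]
      have t : 0 ≤ R^2*p0^2*(‖p‖^2 - u^2) :=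
        mul_nonneg (mul_nonneg (sq_nonneg R) (sq_nonneg p0)) (sub_nonneg.mpr hu2)
      linarith only [hp4, t]
    · -- main case
      have hNpos0 : 0 < ‖p+q‖ := norm_pos_iff.mpr h0
      have hNpos : 0 < ‖p+q‖^2 := by positivity
      have hNne : ‖p+q‖^2 ≠ 0 := ne_of_gt hNpos
      set x := q0 • p - p0 • q with hx
      have E4 : (inner ℝ ω x : ℝ) = q0*u - p0*v := by
        rw [hx, inner_sub_right, real_inner_smul_right, real_inner_smul_right, hu, hv]
      have hcomm : (inner ℝ q p : ℝ) = c := by rw [hc]; exact real_inner_comm p q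
      have E1 : ‖x‖^2 = q0^2*‖p‖^2 + p0^2*‖q‖^2 - 2*(q0*p0)*c := by
        rw [hx, ← real_inner_self_eq_norm_sq]
        simp only [inner_sub_left, inner_sub_right, real_inner_smul_left, real_inner_smul_right]
        rw [real_inner_self_eq_norm_sq, real_inner_self_eq_norm_sq]
        linear_combination (q0*p0)*hc - (q0*p0)*hcomm
      have E2 : (inner ℝ x (p+q) : ℝ) = q0*‖p‖^2 - p0*‖q‖^2 + (q0-p0)*c := by
        rw [hx]
        simp only [inner_sub_left, inner_add_right, real_inner_smul_left]
        rw [real_inner_self_eq_norm_sq, real_inner_self_eq_norm_sq]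
        linear_combination (-q0)*hc - p0*hcomm
      set rv := x - ((inner ℝ x (p+q) : ℝ)/‖p+q‖^2) • (p+q) with hrv
      have hnr : (inner ℝ (p+q) rv : ℝ) = 0 := by
        rw [hrv, inner_sub_right, real_inner_smul_right, real_inner_comm (p+q) x,
          real_inner_self_eq_norm_sq]
        field_simp
        ring
      have hNc : ‖p+q‖^2 * ((inner ℝ x (p+q) : ℝ)/‖p+q‖^2) = (inner ℝ x (p+q) : ℝ) := by
        field_simp
      have hrvω : (inner ℝ ω rv : ℝ) = (inner ℝ ω x : ℝ) - (inner ℝ x (p+q) : ℝ)/‖p+q‖^2*(inner ℝ ω (p+q) : ℝ) := by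
        rw [hrv, inner_sub_right, real_inner_smul_right]
      have hdec : (inner ℝ ω x : ℝ)*‖p+q‖^2 = (inner ℝ x (p+q) : ℝ)*(inner ℝ ω (p+q) : ℝ) + ‖p+q‖^2*(inner ℝ ω rv : ℝ) := by
        rw [hrvω]
        linear_combination (inner ℝ ω (p+q) : ℝ)*hNc
      set ωp := ω - ((inner ℝ ω (p+q) : ℝ)/‖p+q‖^2) • (p+q) with hωp
      have hwr : (inner ℝ ωp rv : ℝ) = (inner ℝ ω rv : ℝ) := by
        rw [hωp, inner_sub_left, real_inner_smul_left, hnr]; ring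
      have hnωp : ‖ωp‖^2 = 1 - (inner ℝ ω (p+q) : ℝ)^2/‖p+q‖^2 := by
        rw [hωp, norm_sub_sq_real, real_inner_smul_right, norm_smul, hω, mul_pow,
          Real.norm_eq_abs, sq_abs]
        field_simp
        try ring
      have hCS := innersq ωp rv
      rw [hwr, hnωp] at hCS
      have hr2 : ‖rv‖^2*‖p+q‖^2 = ‖x‖^2*‖p+q‖^2 - (inner ℝ x (p+q) : ℝ)^2 := by
        rw [hrv, norm_sub_sq_real, real_inner_smul_right, norm_smul, mul_pow,
          Real.norm_eq_abs, sq_abs]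
        field_simp
        try ring
      have hYn : (inner ℝ ω (p+q) : ℝ)^2 ≤ ‖p+q‖^2 := hwn
      have hproj2 : (inner ℝ ω rv : ℝ)^2*(‖p+q‖^2*‖p+q‖^2) ≤ (‖p+q‖^2 - (inner ℝ ω (p+q) : ℝ)^2)*(‖x‖^2*‖p+q‖^2 - (inner ℝ x (p+q):ℝ)^2) := by
        have h4 := mul_le_mul_of_nonneg_right hCS (le_of_lt hNpos)
        have h5 : (1 - (inner ℝ ω (p+q):ℝ)^2/‖p+q‖^2)*‖rv‖^2*‖p+q‖^2 = (‖p+q‖^2 - (inner ℝ ω (p+q):ℝ)^2)*‖rv‖^2 := by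
          field_simp; try ring
        have h7 := mul_le_mul_of_nonneg_right (show (inner ℝ ω rv : ℝ)^2*‖p+q‖^2 ≤ (‖p+q‖^2 - (inner ℝ ω (p+q):ℝ)^2)*‖rv‖^2 by linarith only [h4, h5]) (le_of_lt hNpos)
        have h8 : (‖p+q‖^2 - (inner ℝ ω (p+q):ℝ)^2)*‖rv‖^2*‖p+q‖^2 = (‖p+q‖^2 - (inner ℝ ω (p+q):ℝ)^2)*(‖x‖^2*‖p+q‖^2 - (inner ℝ x (p+q):ℝ)^2) := by
          rw [mul_assoc, hr2]
        linarith only [h7, h8]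
      have hJeq : R^2*(inner ℝ x (p+q) : ℝ) = (p0-q0)*(2+2*p0*q0-2*(R^2*c))/2 := by
        rw [E2]; linear_combination (-q0)*hp2 + p0*hq2
      have hM2eq : p0^2+q0^2-2+2*(R^2*c) = R^2*‖p+q‖^2 := by
        linear_combination hp2 + hq2 - R^2*E3
      have hGeq : (p0^2-1)*(q0^2-1)-(R^2*c)^2 = R^4*(‖p‖^2*‖q‖^2 - c^2) := by
        linear_combination (q0^2-1)*hp2 + (R^2*‖p‖^2)*hq2
      have hGnn : 0 ≤ (p0^2-1)*(q0^2-1)-(R^2*c)^2 := by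
        rw [hGeq]
        exact mul_nonneg (by positivity) (sub_nonneg.mpr hc2)
      have hrho : ‖x‖^2*‖p+q‖^2 - (inner ℝ x (p+q):ℝ)^2 = (p0+q0)^2*(‖p‖^2*‖q‖^2 - c^2) := by
        rw [E1, E2, E3]; ring
      have hYle : (R*(inner ℝ ω (p+q):ℝ))^2 ≤ p0^2+q0^2-2+2*(R^2*c) := by
        rw [hM2eq]
        have := mul_le_mul_of_nonneg_left hYn (sq_nonneg R)
        linarith only [this]
      have h1' : (p0^2+q0^2-2+2*(R^2*c))^2*(R*(inner ℝ ω rv : ℝ))^2 ≤ (p0+q0)^2*((p0^2-1)*(q0^2-1)-(R^2*c)^2)*((p0^2+q0^2-2+2*(R^2*c)) - (R*(inner ℝ ω (p+q):ℝ))^2) := by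
        rw [hM2eq, hGeq]
        have h6 := mul_le_mul_of_nonneg_left hproj2 (show (0:ℝ) ≤ R^6 by positivity)
        have h7 : (p0+q0)^2*(R^4*(‖p‖^2*‖q‖^2-c^2))*(R^2*‖p+q‖^2-(R*(inner ℝ ω (p+q):ℝ))^2) = R^6*((‖p+q‖^2 - (inner ℝ ω (p+q):ℝ)^2)*(‖x‖^2*‖p+q‖^2 - (inner ℝ x (p+q):ℝ)^2)) := by
          rw [hrho]; ring
        linarith only [h6, h7]
      have hKL := keylem p0 q0 (R^2*c) (R*(inner ℝ ω (p+q):ℝ)) (R*(inner ℝ ω rv:ℝ)) hp1 hq1 hGnn hYle h1'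
      have hXrel : R*(q0*u - p0*v)*(p0^2+q0^2-2+2*(R^2*c)) = (p0-q0)*(2+2*p0*q0-2*(R^2*c))/2*(R*(inner ℝ ω (p+q):ℝ)) + (p0^2+q0^2-2+2*(R^2*c))*(R*(inner ℝ ω rv:ℝ)) := by
        rw [← E4, ← hJeq, hM2eq]
        linear_combination R^3*hdec
      have hM2pos : 0 < p0^2+q0^2-2+2*(R^2*c) := by
        rw [hM2eq]; exact mul_pos (pow_pos hR 2) hNpos
      have hKL2 : 4*(R*(q0*u-p0*v)*(p0^2+q0^2-2+2*(R^2*c)))^2 ≤ (2+2*p0*q0-2*(R^2*c)-4)*((p0+q0)^2-(R*(inner ℝ ω (p+q):ℝ))^2)*(p0^2+q0^2-2+2*(R^2*c))^2 := by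
        rw [hXrel]; exact hKL
      have hfin : (4*R^2*(q0*u-p0*v)^2)*((p0^2+q0^2-2+2*(R^2*c))^2) ≤ ((s-4)*(e^2-R^2*(inner ℝ ω (p+q):ℝ)^2))*((p0^2+q0^2-2+2*(R^2*c))^2) := by
        rw [hs, he]
        linarith only [hKL2]
      exact le_of_mul_le_mul_right hfin (pow_pos hM2pos 2)
  -- conclude
  have hnum : (inner ℝ ω ((1/p0) • p - (1/q0) • q) : ℝ) = u/p0 - v/q0 := by
    rw [inner_sub_right, real_inner_smul_right, real_inner_smul_right, hu, hv]
    ring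
  have hnum2 : 2*p0*q0*e*(u/p0 - v/q0) = 2*e*(q0*u - p0*v) := by
    field_simp
  have hatil : atil = 2*e*(q0*u - p0*v) / (e^2 - R^2*(inner ℝ ω (p+q) : ℝ)^2) := by
    rw [ha, hnum, hnum2]
  have hspos : (0:ℝ) < s := by linarith
  have hsqpos : 0 < Real.sqrt s := Real.sqrt_pos.mpr hspos
  have hs4' : s - 4 ≤ R^2*‖p-q‖^2 := by
    rw [hs, E6]; linarith [sq_nonneg (p0-q0), hp2, hq2]
  rw [hatil, abs_div, abs_of_pos hD, div_le_div_iff₀ hD hsqpos]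
  have h1 : 0 ≤ |2*e*(q0*u - p0*v)| *Real.sqrt s := mul_nonneg (abs_nonneg _) (Real.sqrt_nonneg _)
  have h2 : 0 ≤ e*‖p-q‖*(e^2 - R^2*(inner ℝ ω (p+q) : ℝ)^2) :=
    mul_nonneg (mul_nonneg hepos.le (norm_nonneg _)) hD.le
  have hsq : (|2*e*(q0*u - p0*v)| *Real.sqrt s)^2
      ≤ (e*‖p-q‖*(e^2 - R^2*(inner ℝ ω (p+q) : ℝ)^2))^2 := by
    rw [mul_pow, mul_pow, sq_abs, Real.sq_sqrt hspos.le]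
    have t1 : 0 ≤ (s*e^2)*((s-4)*(e^2 - R^2*(inner ℝ ω (p+q) : ℝ)^2) - 4*R^2*(q0*u - p0*v)^2) :=
      mul_nonneg (mul_nonneg hspos.le (sq_nonneg e)) (sub_nonneg.mpr hkey)
    have t2 : 0 ≤ (s*(e^2 - R^2*(inner ℝ ω (p+q) : ℝ)^2)*e^2)*(R^2*‖p-q‖^2 - (s-4)) :=
      mul_nonneg (mul_nonneg (mul_nonneg hspos.le hD.le) (sq_nonneg e)) (by linarith)
    have t3 : 0 ≤ (R^2*‖p-q‖^2*(e^2 - R^2*(inner ℝ ω (p+q) : ℝ)^2)*e^2)*((e^2 - R^2*(inner ℝ ω (p+q) : ℝ)^2) - s) :=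
      mul_nonneg (mul_nonneg (mul_nonneg (mul_nonneg (sq_nonneg R) (sq_nonneg _)) hD.le) (sq_nonneg e)) (by linarith)
    have hexact : R^2*(e^2*‖p-q‖^2*(e^2 - R^2*(inner ℝ ω (p+q) : ℝ)^2)^2 - (2*e*(q0*u - p0*v))^2*s)
        = (s*e^2)*((s-4)*(e^2 - R^2*(inner ℝ ω (p+q) : ℝ)^2) - 4*R^2*(q0*u - p0*v)^2)
          + (s*(e^2 - R^2*(inner ℝ ω (p+q) : ℝ)^2)*e^2)*(R^2*‖p-q‖^2 - (s-4))
          + (R^2*‖p-q‖^2*(e^2 - R^2*(inner ℝ ω (p+q) : ℝ)^2)*e^2)*((e^2 - R^2*(inner ℝ ω (p+q) : ℝ)^2) - s) := by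
      ring
    have hRn : 0 < R^2 := by positivity
    by_contra hcon
    push_neg at hcon
    have hneg : R^2*(e^2*‖p-q‖^2*(e^2 - R^2*(inner ℝ ω (p+q) : ℝ)^2)^2 - (2*e*(q0*u - p0*v))^2*s) < 0 := by
      apply mul_neg_of_pos_of_neg hRn
      linarith only [hcon]
    rw [hexact] at hneg
    linarith only [hneg, t1, t2, t3]
  calc |2*e*(q0*u - p0*v)| *Real.sqrt s
      = Real.sqrt ((|2*e*(q0*u - p0*v)| *Real.sqrt s)^2) := (Real.sqrt_sq h1).symm
    _ ≤ Real.sqrt ((e*‖p-q‖*(e^2 - R^2*(inner ℝ ω (p+q) : ℝ)^2))^2) := Real.sqrt_le_sqrt hsq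
    _ = e*‖p-q‖*(e^2 - R^2*(inner ℝ ω (p+q) : ℝ)^2) := Real.sqrt_sq h2
end
end

section
/- Under the parametrization p' = p − ã(p,q,ω)ω, q' = q + ã(p,q,ω)ω with ã(p,q,ω) = 2p⁰q⁰e·ω·(p̂−q̂)/(e² − R²(ω·(p+q))²), the energy is conserved: √(1+R²|p'|²) + √(1+R²|q'|²) = √(1+R²|p|²) + √(1+R²|q|²). -/
noncomputable section

set_option maxHeartbeats 1000000 in
theorem stmt_8 (p q ω : EuclideanSpace ℝ (Fin 3)) (R : ℝ) (hR : 0 < R)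
    (hω : ‖ω‖ = 1)
    (p0 q0 e atil : ℝ)
    (hp0 : p0 = Real.sqrt (1 + R ^ 2 * ‖p‖ ^ 2))
    (hq0 : q0 = Real.sqrt (1 + R ^ 2 * ‖q‖ ^ 2))
    (he : e = p0 + q0)
    (ha : atil = 2 * p0 * q0 * e * (inner ℝ ω ((1 / p0) • p - (1 / q0) • q) : ℝ) /
      (e ^ 2 - R ^ 2 * (inner ℝ ω (p + q) : ℝ) ^ 2))
    (p' q' : EuclideanSpace ℝ (Fin 3))
    (hp' : p' = p - atil • ω) (hq' : q' = q + atil • ω) :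
    Real.sqrt (1 + R ^ 2 * ‖p'‖ ^ 2) + Real.sqrt (1 + R ^ 2 * ‖q'‖ ^ 2) = p0 + q0 := by
  set P : ℝ := inner ℝ ω p with hPdef
  set Q : ℝ := inner ℝ ω q with hQdef
  have hp0pos : 0 < p0 := by
    rw [hp0]; exact Real.sqrt_pos.mpr (by positivity)
  have hq0pos : 0 < q0 := by
    rw [hq0]; exact Real.sqrt_pos.mpr (by positivity)
  have hp0sq : p0 ^ 2 = 1 + R ^ 2 * ‖p‖ ^ 2 := by
    rw [hp0, Real.sq_sqrt (by positivity)]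
  have hq0sq : q0 ^ 2 = 1 + R ^ 2 * ‖q‖ ^ 2 := by
    rw [hq0, Real.sq_sqrt (by positivity)]
  have hPn : P ^ 2 ≤ ‖p‖ ^ 2 := by
    have h := abs_real_inner_le_norm ω p
    rw [hω, one_mul] at h
    calc P ^ 2 = |P| ^ 2 := (sq_abs P).symm
    _ ≤ ‖p‖ ^ 2 := by gcongr
  have hQn : Q ^ 2 ≤ ‖q‖ ^ 2 := by
    have h := abs_real_inner_le_norm ω q
    rw [hω, one_mul] at h
    calc Q ^ 2 = |Q| ^ 2 := (sq_abs Q).symm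
    _ ≤ ‖q‖ ^ 2 := by gcongr
  have hP2 : R ^ 2 * P ^ 2 ≤ p0 ^ 2 - 1 := by nlinarith [sq_nonneg R]
  have hQ2 : R ^ 2 * Q ^ 2 ≤ q0 ^ 2 - 1 := by nlinarith [sq_nonneg R]
  have hepos : 0 < e := by rw [he]; linarith
  have he2 : e ≠ 0 := hepos.ne'
  have hipq : (inner ℝ ω (p + q) : ℝ) = P + Q := by
    rw [inner_add_right]
  have hD : 0 < e ^ 2 - R ^ 2 * (P + Q) ^ 2 := by
    rw [he]
    nlinarith [sq_nonneg (R * P * q0 - R * Q * p0), mul_pos hp0pos hq0pos]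
  have hiu : (inner ℝ ω ((1 / p0) • p - (1 / q0) • q) : ℝ) = P / p0 - Q / q0 := by
    rw [inner_sub_right, real_inner_smul_right, real_inner_smul_right]
    ring
  have ha' : atil * (e ^ 2 - R ^ 2 * (P + Q) ^ 2) = 2 * e * (q0 * P - p0 * Q) := by
    rw [ha, hipq, hiu, div_mul_cancel₀ _ hD.ne']
    field_simp
  -- the shift d
  set d : ℝ := atil * R ^ 2 * (P + Q) / e with hd
  -- positivity facts
  have hEp : 0 ≤ p0 * (e ^ 2 - R ^ 2 * (P + Q) ^ 2)
      - 2 * R ^ 2 * (P + Q) * (q0 * P - p0 * Q) := by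
    have hid : (p0 * (e ^ 2 - R ^ 2 * (P + Q) ^ 2)
        - 2 * R ^ 2 * (P + Q) * (q0 * P - p0 * Q)) * p0
        = e ^ 2 * (p0 ^ 2 - R ^ 2 * P ^ 2) + (R * (q0 * P - p0 * Q)) ^ 2 := by
      rw [he]; ring
    have hpos : 0 ≤ (p0 * (e ^ 2 - R ^ 2 * (P + Q) ^ 2)
        - 2 * R ^ 2 * (P + Q) * (q0 * P - p0 * Q)) * p0 := by
      rw [hid]
      have : (0:ℝ) ≤ p0 ^ 2 - R ^ 2 * P ^ 2 := by linarith
      positivity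
    exact nonneg_of_mul_nonneg_left hpos hp0pos
  have hEq : 0 ≤ q0 * (e ^ 2 - R ^ 2 * (P + Q) ^ 2)
      + 2 * R ^ 2 * (P + Q) * (q0 * P - p0 * Q) := by
    have hid : (q0 * (e ^ 2 - R ^ 2 * (P + Q) ^ 2)
        + 2 * R ^ 2 * (P + Q) * (q0 * P - p0 * Q)) * q0
        = e ^ 2 * (q0 ^ 2 - R ^ 2 * Q ^ 2) + (R * (q0 * P - p0 * Q)) ^ 2 := by
      rw [he]; ring
    have hpos : 0 ≤ (q0 * (e ^ 2 - R ^ 2 * (P + Q) ^ 2)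
        + 2 * R ^ 2 * (P + Q) * (q0 * P - p0 * Q)) * q0 := by
      rw [hid]
      have : (0:ℝ) ≤ q0 ^ 2 - R ^ 2 * Q ^ 2 := by linarith
      positivity
    exact nonneg_of_mul_nonneg_left hpos hq0pos
  have hnump : 0 ≤ p0 * e - atil * R ^ 2 * (P + Q) := by
    have h1 : (p0 * e - atil * R ^ 2 * (P + Q)) * (e ^ 2 - R ^ 2 * (P + Q) ^ 2)
        = e * (p0 * (e ^ 2 - R ^ 2 * (P + Q) ^ 2)
          - 2 * R ^ 2 * (P + Q) * (q0 * P - p0 * Q)) := by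
      linear_combination (-(R ^ 2 * (P + Q))) * ha'
    have h2 : 0 ≤ (p0 * e - atil * R ^ 2 * (P + Q)) * (e ^ 2 - R ^ 2 * (P + Q) ^ 2) := by
      rw [h1]; exact mul_nonneg hepos.le hEp
    exact nonneg_of_mul_nonneg_left h2 hD
  have hnumq : 0 ≤ q0 * e + atil * R ^ 2 * (P + Q) := by
    have h1 : (q0 * e + atil * R ^ 2 * (P + Q)) * (e ^ 2 - R ^ 2 * (P + Q) ^ 2)
        = e * (q0 * (e ^ 2 - R ^ 2 * (P + Q) ^ 2)
          + 2 * R ^ 2 * (P + Q) * (q0 * P - p0 * Q)) := by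
      linear_combination (R ^ 2 * (P + Q)) * ha'
    have h2 : 0 ≤ (q0 * e + atil * R ^ 2 * (P + Q)) * (e ^ 2 - R ^ 2 * (P + Q) ^ 2) := by
      rw [h1]; exact mul_nonneg hepos.le hEq
    exact nonneg_of_mul_nonneg_left h2 hD
  have hpd : 0 ≤ p0 - d := by
    have : p0 - d = (p0 * e - atil * R ^ 2 * (P + Q)) / e := by
      rw [hd]; field_simp
    rw [this]; exact div_nonneg hnump hepos.le
  have hqd : 0 ≤ q0 + d := by
    have : q0 + d = (q0 * e + atil * R ^ 2 * (P + Q)) / e := by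
      rw [hd]; field_simp
    rw [this]; exact div_nonneg hnumq hepos.le
  -- norm expansions
  have hnp' : ‖p'‖ ^ 2 = ‖p‖ ^ 2 - 2 * atil * P + atil ^ 2 := by
    rw [hp', norm_sub_sq_real, real_inner_smul_right, real_inner_comm,
      norm_smul, hω, ← hPdef]
    simp [abs_sq]
    ring
  have hnq' : ‖q'‖ ^ 2 = ‖q‖ ^ 2 + 2 * atil * Q + atil ^ 2 := by
    rw [hq', norm_add_sq_real, real_inner_smul_right, real_inner_comm,
      norm_smul, hω, ← hQdef]
    simp [abs_sq]
    ring
  -- square identities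
  have hde : d * e = atil * R ^ 2 * (P + Q) := by rw [hd]; field_simp
  have keyp : 1 + R ^ 2 * ‖p'‖ ^ 2 = (p0 - d) ^ 2 := by
    have h1 : (1 + R ^ 2 * ‖p'‖ ^ 2) * e ^ 2 = (p0 - d) ^ 2 * e ^ 2 := by
      have h2 : (p0 - d) ^ 2 * e ^ 2 = (p0 * e - atil * R ^ 2 * (P + Q)) ^ 2 := by
        linear_combination (d * e + atil * R ^ 2 * (P + Q) - 2 * p0 * e) * hde
      rw [h2, hnp']
      linear_combination (-e ^ 2) * hp0sq + R ^ 2 * atil * ha' + (-2 * R ^ 2 * atil * P * e) * he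
    exact mul_right_cancel₀ (pow_ne_zero 2 he2) h1
  have keyq : 1 + R ^ 2 * ‖q'‖ ^ 2 = (q0 + d) ^ 2 := by
    have h1 : (1 + R ^ 2 * ‖q'‖ ^ 2) * e ^ 2 = (q0 + d) ^ 2 * e ^ 2 := by
      have h2 : (q0 + d) ^ 2 * e ^ 2 = (q0 * e + atil * R ^ 2 * (P + Q)) ^ 2 := by
        linear_combination (d * e + atil * R ^ 2 * (P + Q) + 2 * q0 * e) * hde
      rw [h2, hnq']
      linear_combination (-e ^ 2) * hq0sq + R ^ 2 * atil * ha' + (2 * R ^ 2 * atil * Q * e) * he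
    exact mul_right_cancel₀ (pow_ne_zero 2 he2) h1
  rw [keyp, keyq, Real.sqrt_sq hpd, Real.sqrt_sq hqd]
  ring
end
end

section
/- In the covariant variables v = R²p, u = R²q with v⁰ = √(1+R⁻²|v|²), u⁰ = √(1+R⁻²|u|²), e = v⁰+u⁰, the scattering kernel angle satisfies |ω·(v/v⁰ − u/u⁰)| ≤ R·g·e/(v⁰u⁰) ≤ e|v−u|/(v⁰u⁰) for any unit vector ω, where g² = 2v⁰u⁰ − 2 − 2R⁻²(v·u). -/
noncomputable section
set_option maxHeartbeats 1000000

lemma aux_sq_le (x y : ℝ) (hx : 0 ≤ x) (hy : 0 ≤ y) (h : x ^ 2 ≤ y ^ 2) : x ≤ y := by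
  nlinarith

theorem stmt_10 (v u ω : EuclideanSpace ℝ (Fin 3)) (R : ℝ) (hR : 0 < R)
    (hω : ‖ω‖ = 1)
    (v0 u0 e g : ℝ)
    (hv0 : v0 = Real.sqrt (1 + ‖v‖ ^ 2 / R ^ 2))
    (hu0 : u0 = Real.sqrt (1 + ‖u‖ ^ 2 / R ^ 2))
    (he : e = v0 + u0)
    (hg : g = Real.sqrt (2 * v0 * u0 - 2 - 2 * (inner ℝ v u : ℝ) / R ^ 2)) :
    |(inner ℝ ω ((1 / v0) • v - (1 / u0) • u) : ℝ)| ≤ R * g * e / (v0 * u0) ∧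
      R * g * e / (v0 * u0) ≤ e * ‖v - u‖ / (v0 * u0) := by
  have hR2 : (0:ℝ) < R ^ 2 := by positivity
  have hv0sq : v0 ^ 2 = 1 + ‖v‖ ^ 2 / R ^ 2 := by
    rw [hv0, Real.sq_sqrt (by positivity)]
  have hu0sq : u0 ^ 2 = 1 + ‖u‖ ^ 2 / R ^ 2 := by
    rw [hu0, Real.sq_sqrt (by positivity)]
  have hv1 : 1 ≤ v0 := by
    have h1 : Real.sqrt 1 ≤ Real.sqrt (1 + ‖v‖ ^ 2 / R ^ 2) := by
      apply Real.sqrt_le_sqrt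
      have : 0 ≤ ‖v‖ ^ 2 / R ^ 2 := by positivity
      linarith
    rw [Real.sqrt_one] at h1
    rw [hv0]; exact h1
  have hu1 : 1 ≤ u0 := by
    have h1 : Real.sqrt 1 ≤ Real.sqrt (1 + ‖u‖ ^ 2 / R ^ 2) := by
      apply Real.sqrt_le_sqrt
      have : 0 ≤ ‖u‖ ^ 2 / R ^ 2 := by positivity
      linarith
    rw [Real.sqrt_one] at h1
    rw [hu0]; exact h1
  have hv0pos : 0 < v0 := by linarith
  have hu0pos : 0 < u0 := by linarith
  obtain ⟨I, hI⟩ : ∃ I : ℝ, (inner ℝ v u : ℝ) = I := ⟨_, rfl⟩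
  rw [hI] at hg
  have hv2 : ‖v‖ ^ 2 = R ^ 2 * (v0 ^ 2 - 1) := by
    field_simp at hv0sq; nlinarith [hv0sq]
  have hu2 : ‖u‖ ^ 2 = R ^ 2 * (u0 ^ 2 - 1) := by
    field_simp at hu0sq; nlinarith [hu0sq]
  have hcs : |I| ≤ ‖v‖ * ‖u‖ := hI ▸ abs_real_inner_le_norm v u
  have hIle : I ≤ R ^ 2 * (v0 * u0 - 1) := by
    have h1 : I ≤ ‖v‖ * ‖u‖ := (abs_le.mp hcs).2
    have h2 : ‖v‖ * ‖u‖ ≤ R ^ 2 * (v0 * u0 - 1) := by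
      apply aux_sq_le _ _ (by positivity)
      · nlinarith [sq_nonneg (v0 * u0 - 1)]
      · have hh : (‖v‖ * ‖u‖) ^ 2 = R ^ 2 * (v0 ^ 2 - 1) * (R ^ 2 * (u0 ^ 2 - 1)) := by
          rw [mul_pow, hv2, hu2]
        rw [hh]
        nlinarith [mul_nonneg (sq_nonneg (R ^ 2)) (sq_nonneg (v0 - u0))]
    linarith
  have hgarg : 0 ≤ 2 * v0 * u0 - 2 - 2 * I / R ^ 2 := by
    have h : 2 * I / R ^ 2 ≤ 2 * v0 * u0 - 2 := by
      rw [div_le_iff₀ hR2]; nlinarith [hIle]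
    linarith
  have hgsq : R ^ 2 * g ^ 2 = 2 * R ^ 2 * v0 * u0 - 2 * R ^ 2 - 2 * I := by
    rw [hg, Real.sq_sqrt hgarg]
    have hc : R ^ 2 * (2 * I / R ^ 2) = 2 * I := by
      rw [mul_comm, div_mul_cancel₀ _ (ne_of_gt hR2)]
    calc R ^ 2 * (2 * v0 * u0 - 2 - 2 * I / R ^ 2)
        = 2 * R ^ 2 * v0 * u0 - 2 * R ^ 2 - R ^ 2 * (2 * I / R ^ 2) := by ring
      _ = 2 * R ^ 2 * v0 * u0 - 2 * R ^ 2 - 2 * I := by rw [hc]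
  have hg0 : 0 ≤ g := by rw [hg]; exact Real.sqrt_nonneg _
  have hepos : 0 < e := by rw [he]; linarith
  have hnormsq : ‖(1 / v0) • v - (1 / u0) • u‖ ^ 2
      = ‖v‖ ^ 2 / v0 ^ 2 - 2 * I / (v0 * u0) + ‖u‖ ^ 2 / u0 ^ 2 := by
    rw [@norm_sub_sq_real, norm_smul, norm_smul, real_inner_smul_left,
      real_inner_smul_right, hI]
    rw [norm_div, norm_one, Real.norm_eq_abs, abs_of_pos hv0pos,
      norm_div, norm_one, Real.norm_eq_abs, abs_of_pos hu0pos]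
    ring
  have hsubsq : ‖v - u‖ ^ 2 = ‖v‖ ^ 2 - 2 * I + ‖u‖ ^ 2 := by
    rw [@norm_sub_sq_real, hI]
  constructor
  · have h1 : |(inner ℝ ω ((1 / v0) • v - (1 / u0) • u) : ℝ)|
        ≤ ‖(1 / v0) • v - (1 / u0) • u‖ := by
      have := abs_real_inner_le_norm ω ((1 / v0) • v - (1 / u0) • u)
      rwa [hω, one_mul] at this
    refine h1.trans ?_
    apply aux_sq_le _ _ (norm_nonneg _) (by positivity)
    rw [hnormsq, div_pow, le_div_iff₀ (by positivity : (0:ℝ) < (v0 * u0) ^ 2)]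
    have hexp : (R * g * e) ^ 2 = (R ^ 2 * g ^ 2) * e ^ 2 := by ring
    rw [hexp, hgsq, he, hv2, hu2]
    have key1 : 0 ≤ (R ^ 2 * (v0 * u0 - 1) - I) * ((v0 + u0) ^ 2 - v0 * u0) := by
      apply mul_nonneg (by linarith)
      nlinarith
    have hexpand : (R ^ 2 * (v0 ^ 2 - 1) / v0 ^ 2 - 2 * I / (v0 * u0)
        + R ^ 2 * (u0 ^ 2 - 1) / u0 ^ 2) * (v0 * u0) ^ 2
        = R ^ 2 * (v0 ^ 2 - 1) * u0 ^ 2 - 2 * I * v0 * u0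
          + R ^ 2 * (u0 ^ 2 - 1) * v0 ^ 2 := by
      field_simp
    rw [hexpand]
    nlinarith [key1, mul_nonneg (mul_nonneg hR2.le (sq_nonneg (v0 - u0)))
      (by positivity : (0:ℝ) ≤ 1)]
  · have hRg : R * g ≤ ‖v - u‖ := by
      apply aux_sq_le _ _ (by positivity) (norm_nonneg _)
      have h : (R * g) ^ 2 = R ^ 2 * g ^ 2 := by ring
      rw [h, hgsq, hsubsq, hv2, hu2]
      nlinarith [sq_nonneg (v0 - u0)]
    have hnum : R * g * e ≤ e * ‖v - u‖ := by
      nlinarith [mul_le_mul_of_nonneg_right hRg hepos.le]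
    exact (div_le_div_iff_of_pos_right (by positivity)).mpr hnum
end
end

section
/- For every α with 0 < α < 3 there exists a constant C_α such that for all v ∈ ℝ³, ∫_{ℝ³} |v−u|^{−α} e^{−|u|²} du ≤ C_α (1+|v|²)^{−α/2}. -/
noncomputable section
open MeasureTheory Metric Set
open scoped ENNReal

local notation "E3" => EuclideanSpace ℝ (Fin 3)


lemma annulus_calc (α : ℝ) (n : ℕ) :
    (((1/2:ℝ)^(n+1))^(-α)) * (((1/2:ℝ)^n)^(3:ℕ)) = 2^α * ((2:ℝ)^(α-3))^n := by
  have e1 : ((1/2:ℝ)^(n+1))^(-α) = (2:ℝ) ^ (((n:ℝ)+1)*α) := by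
    rw [one_div, inv_pow, ← Real.rpow_natCast (2:ℝ) (n+1), ← Real.rpow_neg (by norm_num),
      ← Real.rpow_mul (by norm_num)]
    push_cast
    ring_nf
  have e2 : (((1/2:ℝ)^n)^(3:ℕ)) = (2:ℝ) ^ (-(3*(n:ℝ))) := by
    rw [one_div, inv_pow, ← Real.rpow_natCast (2:ℝ) n, ← Real.rpow_neg (by norm_num),
      ← Real.rpow_natCast _ (3:ℕ), ← Real.rpow_mul (by norm_num)]
    push_cast
    ring_nf
  have e3 : ((2:ℝ)^(α-3))^n = (2:ℝ) ^ ((α-3)*(n:ℝ)) := by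
    rw [← Real.rpow_natCast ((2:ℝ)^(α-3)) n, ← Real.rpow_mul (by norm_num)]
  rw [e1, e2, e3, ← Real.rpow_add (by norm_num), ← Real.rpow_add (by norm_num)]
  ring_nf

lemma K_lt_top {α : ℝ} (h0 : 0 < α) (h3 : α < 3) :
    ∫⁻ x : E3 in ball 0 1, ENNReal.ofReal (‖x‖ ^ (-α)) < ⊤ := by
  classical
  set F : E3 → ℝ≥0∞ := fun x => ENNReal.ofReal (‖x‖ ^ (-α)) with hF
  set A : ℕ → Set E3 := fun n => ball 0 ((1/2:ℝ)^n) \ ball 0 ((1/2:ℝ)^(n+1)) with hA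
  have hsub : ball (0:E3) 1 ⊆ {0} ∪ ⋃ n, A n := by
    intro x hx
    rcases eq_or_ne x 0 with rfl | hx0
    · exact Or.inl rfl
    right
    have hxn : 0 < ‖x‖ := norm_pos_iff.2 hx0
    have hex : ∃ n : ℕ, (1/2:ℝ)^n ≤ ‖x‖ := by
      obtain ⟨n, hn⟩ := exists_pow_lt_of_lt_one hxn (by norm_num : (1/2:ℝ) < 1)
      exact ⟨n, hn.le⟩
    set n₀ := Nat.find hex with hn₀
    have hspec : (1/2:ℝ)^n₀ ≤ ‖x‖ := Nat.find_spec hex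
    have hx1 : ‖x‖ < 1 := by simpa using mem_ball_zero_iff.1 hx
    have hpos : 0 < n₀ := by
      rcases Nat.eq_zero_or_pos n₀ with h | h
      · exfalso; rw [h] at hspec; simp at hspec; linarith
      · exact h
    have hmin := Nat.find_min hex (show n₀ - 1 < n₀ from Nat.sub_lt hpos one_pos)
    push_neg at hmin
    refine mem_iUnion.2 ⟨n₀ - 1, mem_ball_zero_iff.2 hmin, fun hc => ?_⟩
    have h' : n₀ - 1 + 1 = n₀ := by omega
    have := mem_ball_zero_iff.1 hc
    rw [h'] at this
    linarith
  have hzero : ∫⁻ x in ({0} : Set E3), F x = 0 := by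
    rw [lintegral_singleton]
    have : F 0 = 0 := by
      simp only [hF, norm_zero]
      rw [Real.zero_rpow (by linarith : -α ≠ 0)]
      simp
    rw [this, zero_mul]
  set V := volume (ball (0:E3) 1) with hV
  have hAn : ∀ n, ∫⁻ x in A n, F x ≤
      ENNReal.ofReal (2^α * ((2:ℝ)^(α-3))^n) * V := by
    intro n
    have hmeas : MeasurableSet (A n) := measurableSet_ball.diff measurableSet_ball
    have hb : ∀ x ∈ A n, F x ≤ ENNReal.ofReal (((1/2:ℝ)^(n+1))^(-α)) := by
      intro x hxA
      have h1 : (0:ℝ) < (1/2:ℝ)^(n+1) := by positivity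
      have h2 : (1/2:ℝ)^(n+1) ≤ ‖x‖ := by
        by_contra hcon
        exact hxA.2 (mem_ball_zero_iff.2 (by linarith))
      exact ENNReal.ofReal_le_ofReal
        (Real.rpow_le_rpow_of_nonpos h1 h2 (by linarith))
    calc ∫⁻ x in A n, F x
        ≤ ∫⁻ _ in A n, ENNReal.ofReal (((1/2:ℝ)^(n+1))^(-α)) := setLIntegral_mono' hmeas hb
      _ = ENNReal.ofReal (((1/2:ℝ)^(n+1))^(-α)) * volume (A n) := setLIntegral_const _ _
      _ ≤ ENNReal.ofReal (((1/2:ℝ)^(n+1))^(-α)) * volume (ball (0:E3) ((1/2:ℝ)^n)) := by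
          gcongr
          rw [hA]
          exact diff_subset
      _ = ENNReal.ofReal (((1/2:ℝ)^(n+1))^(-α)) *
            (ENNReal.ofReal (((1/2:ℝ)^n)^(3:ℕ)) * V) := by
          rw [MeasureTheory.Measure.addHaar_ball volume (0:E3)
            (by positivity : (0:ℝ) ≤ (1/2:ℝ)^n)]
          congr 2
          simp
      _ = ENNReal.ofReal (2^α * ((2:ℝ)^(α-3))^n) * V := by
          rw [← mul_assoc, ← ENNReal.ofReal_mul (by positivity), annulus_calc]
  have hq : ENNReal.ofReal ((2:ℝ)^(α-3)) < 1 := by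
    rw [ENNReal.ofReal_lt_one]
    exact Real.rpow_lt_one_of_one_lt_of_neg one_lt_two (by linarith)
  calc ∫⁻ x in ball (0:E3) 1, F x
      ≤ ∫⁻ x in ({0} : Set E3) ∪ ⋃ n, A n, F x := lintegral_mono_set hsub
    _ ≤ (∫⁻ x in ({0} : Set E3), F x) + ∫⁻ x in ⋃ n, A n, F x := lintegral_union_le _ _ _
    _ ≤ 0 + ∑' n, ∫⁻ x in A n, F x := by
        rw [hzero]
        gcongr
        exact lintegral_iUnion_le _ _
    _ ≤ ∑' n, ENNReal.ofReal (2^α * ((2:ℝ)^(α-3))^n) * V := by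
        rw [zero_add]; exact ENNReal.tsum_le_tsum hAn
    _ = (ENNReal.ofReal ((2:ℝ)^α) * V) * ∑' n, (ENNReal.ofReal ((2:ℝ)^(α-3)))^n := by
        rw [← ENNReal.tsum_mul_left]
        refine tsum_congr fun n => ?_
        rw [ENNReal.ofReal_mul (by positivity), ENNReal.ofReal_pow (by positivity)]
        ring
    _ = (ENNReal.ofReal ((2:ℝ)^α) * V) * (1 - ENNReal.ofReal ((2:ℝ)^(α-3)))⁻¹ := by
        rw [ENNReal.tsum_geometric]
    _ < ⊤ := by
        refine ENNReal.mul_lt_top (ENNReal.mul_lt_top ENNReal.ofReal_lt_top measure_ball_lt_top) ?_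
        rw [ENNReal.inv_lt_top]
        exact tsub_pos_of_lt hq


lemma exp2_aux {s : ℝ} (hs : 0 ≤ s) : Real.exp (-s) ≤ 4 * (1 + s) ^ (-(2:ℝ)) := by
  have h1 : (0:ℝ) < 1 + s := by linarith
  have h := Real.add_one_le_exp (s/2)
  have he : Real.exp (s/2) * Real.exp (s/2) = Real.exp s := by
    rw [← Real.exp_add]; ring_nf
  have h2 : (1 + s)^(2:ℕ) ≤ 4 * Real.exp s := by nlinarith [Real.exp_pos (s/2)]
  have h4 : (1 + s)^(-(2:ℝ)) = ((1+s)^(2:ℕ))⁻¹ := by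
    rw [Real.rpow_neg h1.le, Real.rpow_two]
  rw [h4, Real.exp_neg, ← one_div, ← div_eq_mul_inv,
    div_le_div_iff₀ (Real.exp_pos s) (by positivity)]
  linarith

lemma lintegral_ofReal_lt_top' {f : E3 → ℝ} (hf : Integrable f) :
    ∫⁻ x, ENNReal.ofReal (f x) < ⊤ := by
  refine lt_of_le_of_lt (lintegral_mono fun x => ?_) hf.2
  rw [← ofReal_norm_eq_enorm]
  exact ENNReal.ofReal_le_ofReal (le_abs_self _)

lemma gauss_lt_top : ∫⁻ u : E3, ENNReal.ofReal (Real.exp (-‖u‖ ^ 2)) < ⊤ := by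
  have hint : Integrable (fun x : E3 => 4 * ((1:ℝ) + ‖x‖^2) ^ (-(4:ℝ)/2)) := by
    refine (integrable_rpow_neg_one_add_norm_sq (E := E3) ?_).const_mul 4
    simp
    norm_num
  refine lt_of_le_of_lt (lintegral_mono fun u => ?_) (lintegral_ofReal_lt_top' hint)
  refine ENNReal.ofReal_le_ofReal ?_
  have := exp2_aux (s := ‖u‖^2) (by positivity)
  calc Real.exp (-‖u‖^2) ≤ 4 * (1 + ‖u‖^2) ^ (-(2:ℝ)) := this
    _ = 4 * (1 + ‖u‖^2) ^ (-(4:ℝ)/2) := by norm_num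

-- translation
lemma shift_lemma (α : ℝ) (v : E3) (r : ℝ) :
    ∫⁻ u : E3 in ball v r, ENNReal.ofReal (‖v - u‖ ^ (-α)) =
      ∫⁻ x : E3 in ball 0 r, ENNReal.ofReal (‖x‖ ^ (-α)) := by
  have hpre : (fun u : E3 => v - u) ⁻¹' (ball 0 r) = ball v r := by
    ext u
    simp [mem_ball, dist_eq_norm, norm_sub_rev]
  rw [← hpre]
  exact (Measure.measurePreserving_sub_left volume v).setLIntegral_comp_preimage_emb
    (MeasurableEquiv.subLeft v).measurableEmbedding
    (fun x => ENNReal.ofReal (‖x‖ ^ (-α))) (ball 0 r)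

-- bound on any ball, in terms of unit ball integral
lemma ballK (α : ℝ) (h0 : 0 < α) {r : ℝ} (hr : 0 ≤ r) :
    ∫⁻ x : E3 in ball 0 r, ENNReal.ofReal (‖x‖ ^ (-α)) ≤
      (∫⁻ x : E3 in ball 0 1, ENNReal.ofReal (‖x‖ ^ (-α))) +
        ENNReal.ofReal (r ^ (3:ℕ)) * volume (ball (0:E3) 1) := by
  have hmeasF : Measurable fun x : E3 => ENNReal.ofReal (‖x‖ ^ (-α)) := by fun_prop
  have hpt : ∀ x : E3, ENNReal.ofReal (‖x‖ ^ (-α)) ≤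
      (ball (0:E3) 1).indicator (fun x => ENNReal.ofReal (‖x‖ ^ (-α))) x + 1 := by
    intro x
    by_cases hx : x ∈ ball (0:E3) 1
    · rw [indicator_of_mem hx]; exact le_self_add
    · rw [indicator_of_notMem hx, zero_add]
      have h1 : (1:ℝ) ≤ ‖x‖ := by
        by_contra hcon
        exact hx (mem_ball_zero_iff.2 (by linarith))
      have : ‖x‖ ^ (-α) ≤ (1:ℝ) ^ (-α) :=
        Real.rpow_le_rpow_of_nonpos one_pos h1 (by linarith)
      rw [Real.one_rpow] at this
      calc ENNReal.ofReal (‖x‖ ^ (-α)) ≤ ENNReal.ofReal 1 := ENNReal.ofReal_le_ofReal this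
        _ = 1 := ENNReal.ofReal_one
  calc ∫⁻ x in ball (0:E3) r, ENNReal.ofReal (‖x‖ ^ (-α))
      ≤ ∫⁻ x in ball (0:E3) r,
          ((ball (0:E3) 1).indicator (fun x => ENNReal.ofReal (‖x‖ ^ (-α))) x + 1) :=
        lintegral_mono fun x => hpt x
    _ = (∫⁻ x in ball (0:E3) r,
          (ball (0:E3) 1).indicator (fun x => ENNReal.ofReal (‖x‖ ^ (-α))) x) +
          ∫⁻ _ in ball (0:E3) r, (1:ℝ≥0∞) :=
        lintegral_add_right' _ aemeasurable_const
    _ ≤ (∫⁻ x, (ball (0:E3) 1).indicator (fun x => ENNReal.ofReal (‖x‖ ^ (-α))) x) +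
          volume (ball (0:E3) r) := by
        gcongr
        · exact Measure.restrict_le_self
        · rw [setLIntegral_const, one_mul]
    _ ≤ (∫⁻ x in ball (0:E3) 1, ENNReal.ofReal (‖x‖ ^ (-α))) +
          ENNReal.ofReal (r ^ (3:ℕ)) * volume (ball (0:E3) 1) := by
        refine add_le_add ?_ ?_
        · rw [lintegral_indicator measurableSet_ball]
        · rw [MeasureTheory.Measure.addHaar_ball volume (0:E3) hr,
            show Module.finrank ℝ (EuclideanSpace ℝ (Fin 3)) = 3 by simp]

lemma exp3_aux {s : ℝ} (hs : 0 ≤ s) : Real.exp (-(s/4)) ≤ 1728 * (1 + s) ^ (-(3:ℝ)) := by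
  have h1 : (0:ℝ) < 1 + s := by linarith
  have h := Real.add_one_le_exp (s/12)
  have he : Real.exp (s/12) ^ (3:ℕ) = Real.exp (s/4) := by
    rw [← Real.exp_nat_mul]; ring_nf
  have h2 : (1 + s)^(3:ℕ) ≤ 1728 * Real.exp (s/4) := by
    have h12 : (1:ℝ) + s ≤ 12 * Real.exp (s/12) := by linarith
    calc (1 + s)^(3:ℕ) ≤ (12 * Real.exp (s/12))^(3:ℕ) := by
          exact pow_le_pow_left₀ (by linarith) h12 3
      _ = 1728 * Real.exp (s/4) := by rw [mul_pow, he]; norm_num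
  have h4 : (1 + s)^(-(3:ℝ)) = ((1+s)^(3:ℕ))⁻¹ := by
    rw [Real.rpow_neg h1.le, ← Real.rpow_natCast (1+s) 3]; norm_num
  rw [h4, Real.exp_neg, ← one_div, ← div_eq_mul_inv,
    div_le_div_iff₀ (Real.exp_pos _) (by positivity)]
  linarith

set_option maxHeartbeats 1000000

theorem stmt_12 (α : ℝ) (h0 : 0 < α) (h3 : α < 3) :
    ∃ C : ℝ, ∀ v : EuclideanSpace ℝ (Fin 3),
      ∫ u : EuclideanSpace ℝ (Fin 3), ‖v - u‖ ^ (-α) * Real.exp (-‖u‖ ^ 2) ≤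
        C * (1 + ‖v‖ ^ 2) ^ (-α / 2) := by
  classical
  set K : ℝ≥0∞ := ∫⁻ x : E3 in ball 0 1, ENNReal.ofReal (‖x‖ ^ (-α)) with hKdef
  set G : ℝ≥0∞ := ∫⁻ u : E3, ENNReal.ofReal (Real.exp (-‖u‖ ^ 2)) with hGdef
  set V : ℝ≥0∞ := volume (ball (0:E3) 1) with hVdef
  have hKt : K ≠ ⊤ := (K_lt_top h0 h3).ne
  have hGt : G ≠ ⊤ := gauss_lt_top.ne
  have hVt : V ≠ ⊤ := measure_ball_lt_top.ne
  set k : ℝ := K.toReal with hkdef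
  set g : ℝ := G.toReal with hgdef
  set m : ℝ := V.toReal with hmdef
  have hk : K = ENNReal.ofReal k := (ENNReal.ofReal_toReal hKt).symm
  have hg : G = ENNReal.ofReal g := (ENNReal.ofReal_toReal hGt).symm
  have hm : V = ENNReal.ofReal m := (ENNReal.ofReal_toReal hVt).symm
  have hk0 : 0 ≤ k := ENNReal.toReal_nonneg
  have hg0 : 0 ≤ g := ENNReal.toReal_nonneg
  have hm0 : 0 ≤ m := ENNReal.toReal_nonneg
  set C : ℝ := 2^(α/2) * (k + g) + 1728 * k + 1728 * m + 8^(α/2) * g with hCdef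
  refine ⟨C, fun v => ?_⟩
  have hbase : (0:ℝ) < 1 + ‖v‖^2 := by positivity
  set P : ℝ := (1 + ‖v‖ ^ 2) ^ (-α / 2) with hPdef
  have hP0 : 0 ≤ P := Real.rpow_nonneg hbase.le _
  have hFm : Measurable fun x : E3 => ENNReal.ofReal (‖x‖ ^ (-α)) := by fun_prop
  have hFvm : Measurable fun u : E3 => ENNReal.ofReal (‖v - u‖ ^ (-α)) := by fun_prop
  have hGm : Measurable fun u : E3 => ENNReal.ofReal (Real.exp (-‖u‖ ^ 2)) := by fun_prop
  -- the key lintegral estimate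
  have key : ∫⁻ u : E3, ENNReal.ofReal (‖v - u‖ ^ (-α) * Real.exp (-‖u‖ ^ 2)) ≤
      ENNReal.ofReal (C * P) := by
    rcases le_or_gt ‖v‖ 1 with hv | hv
    · -- small v
      have hpt : ∀ u : E3, ENNReal.ofReal (‖v - u‖ ^ (-α) * Real.exp (-‖u‖ ^ 2)) ≤
          (ball v 1).indicator (fun u => ENNReal.ofReal (‖v - u‖ ^ (-α))) u +
            ENNReal.ofReal (Real.exp (-‖u‖ ^ 2)) := by
        intro u
        by_cases hu : u ∈ ball v 1
        · refine le_trans ?_ le_self_add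
          rw [indicator_of_mem hu]
          refine ENNReal.ofReal_le_ofReal ?_
          have h1 : Real.exp (-‖u‖ ^ 2) ≤ 1 :=
            Real.exp_le_one_iff.2 (neg_nonpos.2 (by positivity))
          exact mul_le_of_le_one_right (Real.rpow_nonneg (norm_nonneg _) _) h1
        · refine le_trans ?_ le_add_self
          refine ENNReal.ofReal_le_ofReal ?_
          have h1 : (1:ℝ) ≤ ‖v - u‖ := by
            have := mem_ball.not.1 hu
            push_neg at this
            rwa [dist_comm, dist_eq_norm] at this
          have h2 : ‖v - u‖ ^ (-α) ≤ (1:ℝ) ^ (-α) :=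
            Real.rpow_le_rpow_of_nonpos one_pos h1 (by linarith)
          rw [Real.one_rpow] at h2
          exact mul_le_of_le_one_left (Real.exp_pos _).le h2
      calc ∫⁻ u : E3, ENNReal.ofReal (‖v - u‖ ^ (-α) * Real.exp (-‖u‖ ^ 2))
          ≤ ∫⁻ u : E3, ((ball v 1).indicator (fun u => ENNReal.ofReal (‖v - u‖ ^ (-α))) u +
              ENNReal.ofReal (Real.exp (-‖u‖ ^ 2))) := lintegral_mono hpt
        _ = (∫⁻ u : E3, (ball v 1).indicator (fun u => ENNReal.ofReal (‖v - u‖ ^ (-α))) u) + G :=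
            lintegral_add_right' _ hGm.aemeasurable
        _ = (∫⁻ u : E3 in ball v 1, ENNReal.ofReal (‖v - u‖ ^ (-α))) + G := by
            rw [lintegral_indicator measurableSet_ball]
        _ = K + G := by rw [shift_lemma]
        _ = ENNReal.ofReal (k + g) := by rw [hk, hg, ENNReal.ofReal_add hk0 hg0]
        _ ≤ ENNReal.ofReal (C * P) := by
            refine ENNReal.ofReal_le_ofReal ?_
            have h1 : (2:ℝ)^(α/2) * 2^(-(α/2)) = 1 := by
              rw [← Real.rpow_add two_pos]; simp
            have hPge : (2:ℝ)^(-(α/2)) ≤ P := by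
              rw [hPdef, show -α/2 = -(α/2) by ring]
              exact Real.rpow_le_rpow_of_nonpos hbase
                (by nlinarith [norm_nonneg v, hv]) (by linarith)
            have ha : (0:ℝ) ≤ 2^(α/2) := Real.rpow_nonneg (by norm_num) _
            have h2 : k + g ≤ 2^(α/2) * (k + g) * P := by
              have h2' : (2^(α/2) * 2^(-(α/2))) * (k+g) ≤ (2^(α/2) * P) * (k+g) :=
                mul_le_mul_of_nonneg_right (mul_le_mul_of_nonneg_left hPge ha) (by linarith)
              calc k + g = (2^(α/2) * 2^(-(α/2))) * (k+g) := by rw [h1, one_mul]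
                _ ≤ (2^(α/2) * P) * (k+g) := h2'
                _ = 2^(α/2) * (k+g) * P := by ring
            have h3 : 2^(α/2) * (k + g) * P ≤ C * P := by
              have hrest : 0 ≤ 1728 * k + 1728 * m + 8^(α/2) * g := by positivity
              rw [hCdef]
              nlinarith [mul_nonneg hrest hP0]
            exact h2.trans h3
    · -- large v
      have ht0 : (0:ℝ) < ‖v‖ := by linarith
      have hr0 : (0:ℝ) < ‖v‖/2 := by linarith
      set e : ℝ := Real.exp (-(‖v‖^2/4)) with hedef
      have he0 : 0 ≤ e := (Real.exp_pos _).le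
      have hra : 0 ≤ (‖v‖/2) ^ (-α) := Real.rpow_nonneg hr0.le _
      have hpt : ∀ u : E3, ENNReal.ofReal (‖v - u‖ ^ (-α) * Real.exp (-‖u‖ ^ 2)) ≤
          ENNReal.ofReal e *
            (ball v (‖v‖/2)).indicator (fun u => ENNReal.ofReal (‖v - u‖ ^ (-α))) u +
          ENNReal.ofReal ((‖v‖/2) ^ (-α)) * ENNReal.ofReal (Real.exp (-‖u‖ ^ 2)) := by
        intro u
        by_cases hu : u ∈ ball v (‖v‖/2)
        · refine le_trans ?_ le_self_add
          rw [indicator_of_mem hu, ← ENNReal.ofReal_mul he0]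
          refine ENNReal.ofReal_le_ofReal ?_
          have hd : ‖v - u‖ < ‖v‖/2 := by
            have h5 := mem_ball.1 hu
            rwa [dist_comm, dist_eq_norm] at h5
          have hnu : ‖v‖/2 < ‖u‖ := by
            have h5 : ‖v‖ - ‖u‖ ≤ ‖v - u‖ := norm_sub_norm_le v u
            linarith
          have hexp : Real.exp (-‖u‖^2) ≤ e := by
            rw [hedef]
            apply Real.exp_le_exp.2
            nlinarith
          calc ‖v - u‖ ^ (-α) * Real.exp (-‖u‖ ^ 2) ≤ ‖v - u‖ ^ (-α) * e :=
              mul_le_mul_of_nonneg_left hexp (Real.rpow_nonneg (norm_nonneg _) _)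
            _ = e * ‖v - u‖ ^ (-α) := mul_comm _ _
        · refine le_trans ?_ le_add_self
          rw [← ENNReal.ofReal_mul hra]
          refine ENNReal.ofReal_le_ofReal ?_
          have hd : ‖v‖/2 ≤ ‖v - u‖ := by
            have h5 := mem_ball.not.1 hu
            push_neg at h5
            rwa [dist_comm, dist_eq_norm] at h5
          exact mul_le_mul_of_nonneg_right
            (Real.rpow_le_rpow_of_nonpos hr0 hd (by linarith)) (Real.exp_pos _).le
      have hS1 : (1:ℝ) ≤ ‖v‖^2 := by nlinarith
      have hb1 : (1:ℝ) ≤ 1 + ‖v‖^2 := by linarith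
      set Q : ℝ := (1 + ‖v‖^2) ^ (-(3:ℝ)) with hQdef
      have hQ0 : 0 ≤ Q := Real.rpow_nonneg hbase.le _
      set R32 : ℝ := (1 + ‖v‖^2) ^ ((3:ℝ)/2) with hR32def
      have he3 : e ≤ 1728 * Q := exp3_aux (by positivity)
      have hQP : Q ≤ P := Real.rpow_le_rpow_of_exponent_le hb1 (by linarith)
      have hr3 : (‖v‖/2)^(3:ℕ) ≤ R32 := by
        have step1 : (‖v‖/2)^(3:ℕ) ≤ ‖v‖^(3:ℕ) :=
          pow_le_pow_left₀ (by linarith) (by linarith) 3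
        have step2 : (‖v‖^(2:ℕ) : ℝ)^((3:ℝ)/2) = ‖v‖^(3:ℕ) := by
          rw [← Real.rpow_two, ← Real.rpow_mul (norm_nonneg v)]
          rw [show (2:ℝ)*((3:ℝ)/2) = ((3:ℕ):ℝ) by norm_num, Real.rpow_natCast]
        have step3 : (‖v‖^(2:ℕ) : ℝ)^((3:ℝ)/2) ≤ R32 :=
          Real.rpow_le_rpow (by positivity) (by linarith) (by norm_num)
        rw [step2] at step3
        exact step1.trans step3
      have hcomb : Q * R32 ≤ P := by
        have : Q * R32 = (1 + ‖v‖^2) ^ (-(3:ℝ) + (3:ℝ)/2) := by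
          rw [hQdef, hR32def, ← Real.rpow_add hbase]
        rw [this]
        exact Real.rpow_le_rpow_of_exponent_le hb1 (by linarith)
      have hd8 : (‖v‖/2)^(-α) ≤ 8^(α/2) * P := by
        have hx : (‖v‖/2)^(-α) = ((‖v‖/2)^(2:ℝ))^(-α/2) := by
          rw [show -α = (2:ℝ)*(-α/2) by ring, Real.rpow_mul hr0.le]
          norm_num
        have hsq : (1 + ‖v‖^2)/8 ≤ (‖v‖/2)^(2:ℝ) := by
          rw [Real.rpow_two]
          nlinarith
        have h8 : ((‖v‖/2)^(2:ℝ))^(-α/2) ≤ ((1 + ‖v‖^2)/8)^(-α/2) :=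
          Real.rpow_le_rpow_of_nonpos (by positivity) hsq (by linarith)
        have hdiv : ((1 + ‖v‖^2)/8)^(-α/2) = 8^(α/2) * P := by
          rw [Real.div_rpow hbase.le (by norm_num : (0:ℝ) ≤ 8),
            show -α/2 = -(α/2) by ring, Real.rpow_neg (by norm_num : (0:ℝ) ≤ 8),
            div_eq_mul_inv, inv_inv, hPdef]
          rw [show -(α/2) = -α/2 by ring]
          ring
        rw [hx]
        rw [hdiv] at h8
        exact h8
      calc ∫⁻ u : E3, ENNReal.ofReal (‖v - u‖ ^ (-α) * Real.exp (-‖u‖ ^ 2))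
          ≤ ∫⁻ u : E3, (ENNReal.ofReal e *
              (ball v (‖v‖/2)).indicator (fun u => ENNReal.ofReal (‖v - u‖ ^ (-α))) u +
              ENNReal.ofReal ((‖v‖/2) ^ (-α)) * ENNReal.ofReal (Real.exp (-‖u‖ ^ 2))) :=
            lintegral_mono hpt
        _ = ENNReal.ofReal e *
              (∫⁻ u : E3, (ball v (‖v‖/2)).indicator (fun u => ENNReal.ofReal (‖v - u‖ ^ (-α))) u) +
              ENNReal.ofReal ((‖v‖/2) ^ (-α)) * G := by
            rw [lintegral_add_left ((hFvm.indicator measurableSet_ball).const_mul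
                (ENNReal.ofReal e)),
              lintegral_const_mul' _ _ ENNReal.ofReal_ne_top,
              lintegral_const_mul' _ _ ENNReal.ofReal_ne_top]
        _ = ENNReal.ofReal e * (∫⁻ u : E3 in ball v (‖v‖/2), ENNReal.ofReal (‖v - u‖ ^ (-α))) +
              ENNReal.ofReal ((‖v‖/2) ^ (-α)) * G := by
            rw [lintegral_indicator measurableSet_ball]
        _ = ENNReal.ofReal e * (∫⁻ x : E3 in ball 0 (‖v‖/2), ENNReal.ofReal (‖x‖ ^ (-α))) +
              ENNReal.ofReal ((‖v‖/2) ^ (-α)) * G := by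
            rw [shift_lemma]
        _ ≤ ENNReal.ofReal e * (K + ENNReal.ofReal ((‖v‖/2) ^ (3:ℕ)) * V) +
              ENNReal.ofReal ((‖v‖/2) ^ (-α)) * G := by
            gcongr
            exact ballK α h0 hr0.le
        _ = ENNReal.ofReal (e * (k + (‖v‖/2)^(3:ℕ) * m) + (‖v‖/2)^(-α) * g) := by
            rw [hk, hm, hg,
              ← ENNReal.ofReal_mul (by positivity : (0:ℝ) ≤ (‖v‖/2)^(3:ℕ)),
              ← ENNReal.ofReal_add hk0 (by positivity),
              ← ENNReal.ofReal_mul he0,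
              ← ENNReal.ofReal_mul hra,
              ← ENNReal.ofReal_add (by positivity) (by positivity)]
        _ ≤ ENNReal.ofReal (C * P) := by
            refine ENNReal.ofReal_le_ofReal ?_
            have A1 : e * k ≤ (1728 * Q) * k := mul_le_mul_of_nonneg_right he3 hk0
            have A2 : e * ((‖v‖/2)^(3:ℕ) * m) ≤ (1728 * Q) * (R32 * m) := by
              refine mul_le_mul he3 (mul_le_mul_of_nonneg_right hr3 hm0)
                (by positivity) (by positivity)
            have A3 : Q * k ≤ P * k := mul_le_mul_of_nonneg_right hQP hk0
            have A4 : (Q * R32) * m ≤ P * m := mul_le_mul_of_nonneg_right hcomb hm0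
            have A5 : (‖v‖/2)^(-α) * g ≤ (8^(α/2) * P) * g :=
              mul_le_mul_of_nonneg_right hd8 hg0
            have hextra : 0 ≤ (2^(α/2) * (k + g)) * P := by positivity
            rw [hCdef]
            linarith [A1, A2, A3, A4, A5, hextra]
  -- conversion from lintegral to integral
  have hmeas : Measurable fun u : E3 => ‖v - u‖ ^ (-α) * Real.exp (-‖u‖ ^ 2) := by fun_prop
  have hnn : 0 ≤ᵐ[volume] fun u : E3 => ‖v - u‖ ^ (-α) * Real.exp (-‖u‖ ^ 2) :=
    Filter.Eventually.of_forall fun u => by positivity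
  rw [integral_eq_lintegral_of_nonneg_ae hnn hmeas.aestronglyMeasurable]
  have hCP0 : 0 ≤ C * P := by
    have hC0 : 0 ≤ C := by rw [hCdef]; positivity
    exact mul_nonneg hC0 hP0
  calc (∫⁻ u : E3, ENNReal.ofReal (‖v - u‖ ^ (-α) * Real.exp (-‖u‖ ^ 2))).toReal
      ≤ (ENNReal.ofReal (C * P)).toReal :=
        ENNReal.toReal_mono ENNReal.ofReal_ne_top key
    _ = C * P := ENNReal.toReal_ofReal hCP0
end
end

section
/- Let A > 0 and B, C ∈ ℝ with AC − B² ≥ 0. Then for every real χ, Aχ² + 2Bχ + C ≥ (AC − B²)/A. Consequently, for vectors a_v, b_v, a_u, b_u ∈ ℝ³ with b_v, b_u ≠ 0 and any χ ∈ ℝ, |a_v + χb_v|² + |a_u + χb_u|² ≥ |a_v×(b_v/|b_v|)|² + |a_u×(b_u/|b_u|)|². -/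
noncomputable section

lemma quad_lb (A B C : ℝ) (hA : 0 < A) :
    ∀ χ : ℝ, (A * C - B ^ 2) / A ≤ A * χ ^ 2 + 2 * B * χ + C := by
  intro χ
  rw [div_le_iff₀ hA]
  nlinarith [sq_nonneg (A * χ + B), sq_nonneg χ]

lemma lagrange (a b : EuclideanSpace ℝ (Fin 3)) :
    ‖cross3 a b‖ ^ 2 = ‖a‖ ^ 2 * ‖b‖ ^ 2 - (inner ℝ a b : ℝ) ^ 2 := by
  rw [← real_inner_self_eq_norm_sq, ← real_inner_self_eq_norm_sq,
    ← real_inner_self_eq_norm_sq]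
  simp only [cross3, PiLp.inner_apply, RCLike.inner_apply, conj_trivial, PiLp.toLp_apply,
    Fin.sum_univ_three, Matrix.cons_val_zero, Matrix.cons_val_one, Matrix.head_cons,
    Matrix.cons_val_two, Matrix.tail_cons]
  ring

lemma key (a b : EuclideanSpace ℝ (Fin 3)) (hb : b ≠ 0) (χ : ℝ) :
    ‖cross3 a ((1 / ‖b‖) • b)‖ ^ 2 ≤ ‖a + χ • b‖ ^ 2 := by
  have hbn : (0:ℝ) < ‖b‖ := norm_pos_iff.mpr hb
  have hA : (0:ℝ) < ‖b‖ ^ 2 := by positivity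
  have hL : ‖cross3 a ((1 / ‖b‖) • b)‖ ^ 2
      = (‖b‖ ^ 2 * ‖a‖ ^ 2 - (inner ℝ a b : ℝ) ^ 2) / ‖b‖ ^ 2 := by
    rw [lagrange, norm_smul, real_inner_smul_right]
    simp only [one_div, norm_inv, norm_norm]
    field_simp
  have hR : ‖a + χ • b‖ ^ 2
      = ‖b‖ ^ 2 * χ ^ 2 + 2 * (inner ℝ a b : ℝ) * χ + ‖a‖ ^ 2 := by
    rw [norm_add_sq_real, real_inner_smul_right, norm_smul]
    simp [mul_pow]
    ring
  rw [hL, hR]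
  exact quad_lb (‖b‖ ^ 2) (inner ℝ a b) (‖a‖ ^ 2) hA χ

theorem stmt_16 (A B C : ℝ) (hA : 0 < A) (hdisc : 0 ≤ A * C - B ^ 2) :
    (∀ χ : ℝ, (A * C - B ^ 2) / A ≤ A * χ ^ 2 + 2 * B * χ + C) ∧
      ∀ av bv au bu : EuclideanSpace ℝ (Fin 3), bv ≠ 0 → bu ≠ 0 → ∀ χ : ℝ,
        ‖cross3 av ((1 / ‖bv‖) • bv)‖ ^ 2 + ‖cross3 au ((1 / ‖bu‖) • bu)‖ ^ 2 ≤
          ‖av + χ • bv‖ ^ 2 + ‖au + χ • bu‖ ^ 2 := by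
  refine ⟨quad_lb A B C hA, fun av bv au bu hbv hbu χ => ?_⟩
  exact add_le_add (key av bv hbv χ) (key au bu hbu χ)
end
end

section
/- Let x, v, u ∈ ℝ³, ω ∈ S², a ∈ ℝ with a ≠ 0, v×(v−aω) ≠ 0 and v×(u+aω) ≠ 0, and set v' = v − aω, u' = u + aω. Then for every χ ∈ ℝ, |x×v' + χ(v×v')|² + |x×u' + χ(v×u')|² ≥ |ω·(x×v)|². (This gives the lower bound D ≥ |ω·p_x|² with p_x = v×x used in the gain-term estimate.) -/
noncomputable section

private lemma aux18 (A0 A1 A2 B0 B1 B2 p w0 w1 w2 a : ℝ)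
    (h1 : A1 * B2 - A2 * B1 = -(a * p) * w0)
    (h2 : A2 * B0 - A0 * B2 = -(a * p) * w1)
    (h3 : A0 * B1 - A1 * B0 = -(a * p) * w2)
    (hB : B0 ^ 2 + B1 ^ 2 + B2 ^ 2 ≤ a ^ 2 * (w0 ^ 2 + w1 ^ 2 + w2 ^ 2))
    (hBpos : 0 < B0 ^ 2 + B1 ^ 2 + B2 ^ 2) :
    p ^ 2 ≤ A0 ^ 2 + A1 ^ 2 + A2 ^ 2 := by
  have lag : (A0 ^ 2 + A1 ^ 2 + A2 ^ 2) * (B0 ^ 2 + B1 ^ 2 + B2 ^ 2) =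
      (A1 * B2 - A2 * B1) ^ 2 + (A2 * B0 - A0 * B2) ^ 2 + (A0 * B1 - A1 * B0) ^ 2 +
        (A0 * B0 + A1 * B1 + A2 * B2) ^ 2 := by ring
  rw [h1, h2, h3] at lag
  have hc : p ^ 2 * (B0 ^ 2 + B1 ^ 2 + B2 ^ 2) ≤
      (A0 ^ 2 + A1 ^ 2 + A2 ^ 2) * (B0 ^ 2 + B1 ^ 2 + B2 ^ 2) := by
    nlinarith [sq_nonneg (A0 * B0 + A1 * B1 + A2 * B2), sq_nonneg p]
  exact le_of_mul_le_mul_right hc hBpos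

set_option maxHeartbeats 1000000 in
theorem stmt_18 (x v u ω : EuclideanSpace ℝ (Fin 3)) (hω : ‖ω‖ = 1)
    (a : ℝ) (ha : a ≠ 0)
    (v' u' : EuclideanSpace ℝ (Fin 3))
    (hv' : v' = v - a • ω) (hu' : u' = u + a • ω)
    (hbv : cross3 v v' ≠ 0) (hbu : cross3 v u' ≠ 0) :
    ∀ χ : ℝ,
      (inner ℝ ω (cross3 x v) : ℝ) ^ 2 ≤
        ‖cross3 x v' + χ • cross3 v v'‖ ^ 2 + ‖cross3 x u' + χ • cross3 v u'‖ ^ 2 := by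
  intro χ
  have h2 : (0:ℝ) ≤ ‖cross3 x u' + χ • cross3 v u'‖ ^ 2 := sq_nonneg _
  have hnorm : ∀ w : EuclideanSpace ℝ (Fin 3),
      ‖w‖ ^ 2 = w 0 ^ 2 + w 1 ^ 2 + w 2 ^ 2 := by
    intro w
    rw [EuclideanSpace.norm_eq, Real.sq_sqrt (by positivity)]
    simp [Fin.sum_univ_three, Real.norm_eq_abs, sq_abs]
  have hωsq : ω 0 ^ 2 + ω 1 ^ 2 + ω 2 ^ 2 = 1 := by
    rw [← hnorm, hω]; norm_num
  -- coordinates of v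
  have hw0 : v 0 = v' 0 + a * ω 0 := by rw [hv']; simp
  have hw1 : v 1 = v' 1 + a * ω 1 := by rw [hv']; simp
  have hw2 : v 2 = v' 2 + a * ω 2 := by rw [hv']; simp
  set p : ℝ := (inner ℝ ω (cross3 x v) : ℝ) with hp
  have hpdef : p = ω 0 * (x 1 * v 2 - x 2 * v 1) + ω 1 * (x 2 * v 0 - x 0 * v 2)
      + ω 2 * (x 0 * v 1 - x 1 * v 0) := by
    rw [hp]
    simp [PiLp.inner_apply, Fin.sum_univ_three, cross3]; ring
  set A : EuclideanSpace ℝ (Fin 3) := cross3 x v' + χ • cross3 v v' with hA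
  set B : EuclideanSpace ℝ (Fin 3) := cross3 v v' with hB
  have hB0 : B 0 = v 1 * v' 2 - v 2 * v' 1 := by rw [hB]; rfl
  have hB1 : B 1 = v 2 * v' 0 - v 0 * v' 2 := by rw [hB]; rfl
  have hB2 : B 2 = v 0 * v' 1 - v 1 * v' 0 := by rw [hB]; rfl
  have hA0 : A 0 = (x 1 * v' 2 - x 2 * v' 1) + χ * B 0 := by
    rw [hA]; simp [cross3, hB]
  have hA1 : A 1 = (x 2 * v' 0 - x 0 * v' 2) + χ * B 1 := by
    rw [hA]; simp [cross3, hB]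
  have hA2 : A 2 = (x 0 * v' 1 - x 1 * v' 0) + χ * B 2 := by
    rw [hA]; simp [cross3, hB]
  have hbnorm : 0 < ‖B‖ := norm_pos_iff.mpr hbv
  have hBpos : 0 < B 0 ^ 2 + B 1 ^ 2 + B 2 ^ 2 := by
    have h := hnorm B
    nlinarith [hbnorm]
  have hBle : B 0 ^ 2 + B 1 ^ 2 + B 2 ^ 2 ≤ a ^ 2 * (v' 0 ^ 2 + v' 1 ^ 2 + v' 2 ^ 2) := by
    have hid : B 0 ^ 2 + B 1 ^ 2 + B 2 ^ 2 =
        a ^ 2 * ((ω 0 ^ 2 + ω 1 ^ 2 + ω 2 ^ 2) * (v' 0 ^ 2 + v' 1 ^ 2 + v' 2 ^ 2)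
          - (ω 0 * v' 0 + ω 1 * v' 1 + ω 2 * v' 2) ^ 2) := by
      rw [hB0, hB1, hB2, hw0, hw1, hw2]; ring
    rw [hid, hωsq]
    nlinarith [sq_nonneg (ω 0 * v' 0 + ω 1 * v' 1 + ω 2 * v' 2), sq_nonneg a]
  rw [hB0, hB1, hB2] at hBpos hBle
  have key : p ^ 2 ≤ ‖A‖ ^ 2 := by
    have hAsum : ‖A‖ ^ 2 = (x 1 * v' 2 - x 2 * v' 1 + χ * (v 1 * v' 2 - v 2 * v' 1)) ^ 2
        + (x 2 * v' 0 - x 0 * v' 2 + χ * (v 2 * v' 0 - v 0 * v' 2)) ^ 2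
        + (x 0 * v' 1 - x 1 * v' 0 + χ * (v 0 * v' 1 - v 1 * v' 0)) ^ 2 := by
      rw [hnorm A, hA0, hA1, hA2, hB0, hB1, hB2]
    rw [hAsum]
    apply aux18 _ _ _ (v 1 * v' 2 - v 2 * v' 1) (v 2 * v' 0 - v 0 * v' 2)
      (v 0 * v' 1 - v 1 * v' 0) p (v' 0) (v' 1) (v' 2) a _ _ _ hBle hBpos
    · rw [hpdef, hw0, hw1, hw2]; ring
    · rw [hpdef, hw0, hw1, hw2]; ring
    · rw [hpdef, hw0, hw1, hw2]; ring
  linarith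
end
end
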